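/- For real c > 0 and ρ > 0, the function y(x) = α·e^{-ρ(1-x)}·Σ_{k=0}^{i} (-1)^k·C(i,k)·(1-x)^k/(c+k)·φ(c+k, c+k+1; ρ(1-x)) satisfies the ODE (1-x)·y'(x) - [ρ(1-x) + c]·y(x) + α·x^i = 0 on (0,1), where φ(a,b;z) = Σ_{n≥0} (a)_n/(b)_n · z^n/n! is the confluent hypergeometric function. -/

import Mathlib

open Real Finset

/-- Kummer's confluent hypergeometric series `φ(a,b;z) = Σ (a)_n/(b)_n · z^n/n!`. -/
noncomputable def phi (a b z : ℝ) : ℝ :=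
  ∑' n : ℕ, ((ascPochhammer ℝ n).eval a / (ascPochhammer ℝ n).eval b) * z ^ n / n.factorial

/-! For `a > 0` one has `(a)ₙ/(a+1)ₙ = a/(a+n)`, so `φ(a, a+1; z) = Σ a/(a+n) zⁿ/n!`, and termwise
differentiation gives `z φ' + a φ = a eᶻ`. Hence `Fₖ(u) = uᵏ/(c+k) · φ(c+k, c+k+1; ρu)` satisfies
`u Fₖ' + c Fₖ = uᵏ e^{ρu}`, and by the binomial theorem `G = Σ (-1)ᵏ C(i,k) Fₖ` satisfies
`u G' + c G = (1-u)ⁱ e^{ρu}`. Putting `u = 1 - x`, the factor `e^{-ρu}` in `y = α e^{-ρu} G` absorbs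
the term `ρ(1-x) y` and the equation for `y` reduces to the one for `G`. -/

open scoped Nat

lemma mul_natCast_mul_pow_sub_one (z : ℝ) (n : ℕ) : z * (n * z ^ (n - 1)) = n * z ^ n := by
  rcases eq_or_ne n 0 with rfl | hn
  · simp
  · rw [mul_left_comm, mul_pow_sub_one hn]

lemma summable_natCast_mul_pow_sub_one_div_factorial (R : ℝ) :
    Summable fun n : ℕ => n * R ^ (n - 1) / n ! := by
  refine (summable_nat_add_iff 1).mp ((Real.summable_pow_div_factorial R).congr fun n => ?_)
  rw [Nat.factorial_succ, add_tsub_cancel_right]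
  push_cast
  field_simp

section BoundedCoefficients

variable {w : ℕ → ℝ} {C : ℝ}

lemma abs_mul_pow_div_factorial_le (hw : ∀ n, |w n| ≤ C) {y R : ℝ} (hy : |y| ≤ R) (n : ℕ) :
    |w n * y ^ n / n !| ≤ C * (R ^ n / n !) := by
  rw [abs_div, abs_mul, abs_pow, Nat.abs_cast, mul_div_assoc]
  gcongr
  · exact (abs_nonneg _).trans (hw 0)
  · exact hw n

lemma abs_mul_natCast_mul_pow_sub_one_div_factorial_le (hw : ∀ n, |w n| ≤ C) {y R : ℝ}
    (hy : |y| ≤ R) (n : ℕ) :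
    |w n * (n * y ^ (n - 1)) / n !| ≤ C * (n * R ^ (n - 1) / n !) := by
  rw [abs_div, abs_mul, abs_mul, abs_pow, Nat.abs_cast, Nat.abs_cast, mul_div_assoc]
  gcongr
  · exact (abs_nonneg _).trans (hw 0)
  · exact hw n

lemma summable_mul_pow_div_factorial (hw : ∀ n, |w n| ≤ C) (z : ℝ) :
    Summable fun n => w n * z ^ n / n ! :=
  .of_norm_bounded ((Real.summable_pow_div_factorial |z|).mul_left C)
    (abs_mul_pow_div_factorial_le hw le_rfl)

lemma summable_mul_natCast_mul_pow_sub_one_div_factorial (hw : ∀ n, |w n| ≤ C) (z : ℝ) :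
    Summable fun n => w n * (n * z ^ (n - 1)) / n ! :=
  .of_norm_bounded ((summable_natCast_mul_pow_sub_one_div_factorial |z|).mul_left C)
    (abs_mul_natCast_mul_pow_sub_one_div_factorial_le hw le_rfl)

lemma hasDerivAt_tsum_mul_pow_div_factorial (hw : ∀ n, |w n| ≤ C) (z : ℝ) :
    HasDerivAt (fun y => ∑' n, w n * y ^ n / n !) (∑' n, w n * (n * z ^ (n - 1)) / n !) z := by
  have hz : z ∈ Metric.ball (0 : ℝ) (|z| + 1) := by simp
  refine hasDerivAt_tsum_of_isPreconnected
    ((summable_natCast_mul_pow_sub_one_div_factorial (|z| + 1)).mul_left C) Metric.isOpen_ball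
    (convex_ball _ _).isPreconnected (fun n y _ => ((hasDerivAt_pow n y).const_mul _).div_const _)
    (fun n y hy => abs_mul_natCast_mul_pow_sub_one_div_factorial_le hw
      (mem_ball_zero_iff.mp hy).le n) hz (summable_mul_pow_div_factorial hw z) hz

end BoundedCoefficients

lemma ascPochhammer_eval_div_eval_add_one {a : ℝ} (ha : 0 < a) (n : ℕ) :
    (ascPochhammer ℝ n).eval a / (ascPochhammer ℝ n).eval (a + 1) = a / (a + n) := by
  have hpos : 0 < (ascPochhammer ℝ n).eval (a + 1) := ascPochhammer_pos n _ (by linarith)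
  have hsucc : (ascPochhammer ℝ n).eval a * (a + n) = a * (ascPochhammer ℝ n).eval (a + 1) := by
    rw [← ascPochhammer_succ_eval, ascPochhammer_succ_left]
    simp [Polynomial.eval_comp]
  rw [div_eq_div_iff hpos.ne' (by positivity), hsucc]

lemma phi_add_one_eq_tsum {a : ℝ} (ha : 0 < a) :
    phi a (a + 1) = fun z => ∑' n, a / (a + n) * z ^ n / n ! := by
  ext z
  simp only [phi, ascPochhammer_eval_div_eval_add_one ha]

theorem phi_add_one_ode {a : ℝ} (ha : 0 < a) (z : ℝ) :
    ∃ d, HasDerivAt (phi a (a + 1)) d z ∧ z * d + a * phi a (a + 1) z = a * exp z := by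
  have hw : ∀ n : ℕ, |a / (a + n)| ≤ 1 := fun n => by
    rw [abs_of_pos (by positivity), div_le_one (by positivity)]
    linarith [n.cast_nonneg (α := ℝ)]
  refine ⟨_, phi_add_one_eq_tsum ha ▸ hasDerivAt_tsum_mul_pow_div_factorial hw z, ?_⟩
  have hexp : HasSum (fun n => a * (z ^ n / n !)) (a * exp z) := by
    rw [Real.exp_eq_exp_ℝ, NormedSpace.exp_eq_tsum_div]
    exact (Real.summable_pow_div_factorial z).hasSum.mul_left a
  have hsum := ((summable_mul_natCast_mul_pow_sub_one_div_factorial hw z).hasSum.mul_left z).add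
    ((summable_mul_pow_div_factorial hw z).hasSum.mul_left a)
  have hterm : ∀ n : ℕ,
      z * (a / (a + n) * (n * z ^ (n - 1)) / n !) + a * (a / (a + n) * z ^ n / n !)
        = a * (z ^ n / n !) := fun n => by
    have hcoeff : a / (a + n) * n + a * (a / (a + n)) = a := by
      field_simp
      ring
    linear_combination
      (z ^ n / n !) * hcoeff + (a / (a + n) / n !) * mul_natCast_mul_pow_sub_one z n
  simp only [hterm] at hsum
  rw [phi_add_one_eq_tsum ha]
  exact hsum.unique hexp

lemma pow_mul_phi_add_one_ode {c : ℝ} {k : ℕ} (hck : 0 < c + k) (ρ u : ℝ) :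
    ∃ d, HasDerivAt (fun v => v ^ k / (c + k) * phi (c + k) (c + k + 1) (ρ * v)) d u ∧
      u * d + c * (u ^ k / (c + k) * phi (c + k) (c + k + 1) (ρ * u)) = u ^ k * exp (ρ * u) := by
  obtain ⟨d, hd, hode⟩ := phi_add_one_ode hck (ρ * u)
  refine ⟨_, ((hasDerivAt_pow k u).div_const _).mul (hd.comp u ((hasDerivAt_id u).const_mul ρ)), ?_⟩
  linear_combination (u ^ k / (c + k)) * hode
    + (phi (c + k) (c + k + 1) (ρ * u) / (c + k)) * mul_natCast_mul_pow_sub_one u k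
    + u ^ k * exp (ρ * u) * div_self hck.ne'

lemma sum_pow_mul_phi_add_one_ode {c : ℝ} (hc : 0 < c) (ρ : ℝ) (s : Finset ℕ) (b : ℕ → ℝ)
    (u : ℝ) :
    ∃ d, HasDerivAt (fun v => ∑ k ∈ s, b k * v ^ k / (c + k) * phi (c + k) (c + k + 1) (ρ * v))
        d u ∧
      u * d + c * ∑ k ∈ s, b k * u ^ k / (c + k) * phi (c + k) (c + k + 1) (ρ * u)
        = (∑ k ∈ s, b k * u ^ k) * exp (ρ * u) := by
  choose d hd hode using fun k : ℕ => pow_mul_phi_add_one_ode (c := c) (k := k) (by positivity) ρ u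
  refine ⟨∑ k ∈ s, b k * d k, ?_, ?_⟩
  · simp only [mul_div_assoc, mul_assoc]
    exact HasDerivAt.fun_sum fun k _ => (hd k).const_mul (b k)
  · rw [mul_sum, mul_sum, ← sum_add_distrib, sum_mul]
    exact sum_congr rfl fun k _ => by linear_combination b k * hode k

lemma sum_range_neg_one_pow_mul_choose_mul_pow {R : Type*} [CommRing R] (u : R) (i : ℕ) :
    ∑ k ∈ range (i + 1), (-1) ^ k * (i.choose k : R) * u ^ k = (1 - u) ^ i := by
  rw [sub_eq_neg_add, add_pow]
  refine sum_congr rfl fun k _ => ?_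
  rw [neg_pow, one_pow]
  ring

theorem stmt_4_general (ρ c α : ℝ) (hc : c > 0) (i : ℕ) :
    ∀ x ∈ Set.Ioo (0 : ℝ) 1, ∃ d : ℝ,
      HasDerivAt (fun t : ℝ => α * exp (-ρ * (1 - t)) *
        ∑ k ∈ range (i + 1), (-1 : ℝ) ^ k * (i.choose k : ℝ) * (1 - t) ^ k / (c + k) *
          phi (c + k) (c + k + 1) (ρ * (1 - t))) d x ∧
      (1 - x) * d - (ρ * (1 - x) + c) * (α * exp (-ρ * (1 - x)) *
        ∑ k ∈ range (i + 1), (-1 : ℝ) ^ k * (i.choose k : ℝ) * (1 - x) ^ k / (c + k) *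
          phi (c + k) (c + k + 1) (ρ * (1 - x))) + α * x ^ i = 0 := by
  intro x _
  obtain ⟨d, hd, hode⟩ := sum_pow_mul_phi_add_one_ode hc ρ (range (i + 1))
    (fun k => (-1) ^ k * (i.choose k : ℝ)) (1 - x)
  rw [sum_range_neg_one_pow_mul_choose_mul_pow, sub_sub_cancel] at hode
  have hy := (((hasDerivAt_id' (1 - x)).const_mul (-ρ)).exp.const_mul α).mul hd
  refine ⟨_, hy.comp x ((hasDerivAt_id' x).const_sub 1), ?_⟩
  have hexp : exp (-ρ * (1 - x)) * exp (ρ * (1 - x)) = 1 := by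
    rw [← exp_add, neg_mul, neg_add_cancel, exp_zero]
  linear_combination (-α * exp (-ρ * (1 - x))) * hode - α * x ^ i * hexp

/-- The explicit function (3.7) solves the ODE `(1-x)y' - (ρ(1-x)+c)y + αx^i = 0` on `(0,1)`. -/
theorem stmt_4 (ρ c α : ℝ) (hρ : ρ > 0) (hc : c > 0) (hα : α > 0) (i : ℕ) :
    ∀ x ∈ Set.Ioo (0 : ℝ) 1, ∃ d : ℝ,
      HasDerivAt (fun t : ℝ => α * exp (-ρ * (1 - t)) *
        ∑ k ∈ range (i + 1), (-1 : ℝ) ^ k * (i.choose k : ℝ) * (1 - t) ^ k / (c + k) *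
          phi (c + k) (c + k + 1) (ρ * (1 - t))) d x ∧
      (1 - x) * d - (ρ * (1 - x) + c) * (α * exp (-ρ * (1 - x)) *
        ∑ k ∈ range (i + 1), (-1 : ℝ) ^ k * (i.choose k : ℝ) * (1 - x) ^ k / (c + k) *
          phi (c + k) (c + k + 1) (ρ * (1 - x))) + α * x ^ i = 0 :=
  stmt_4_general ρ c α hc i
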